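/- arXiv:1509.08821 — 2 statements merged into one kernel-verified Lean document; each statement's English description precedes it below -/
import Mathlib

section
/- Let S ⊆ ℕ be a symmetric cofinite set with 0 ∈ S and genus δ = δ_S. Let a_1 < a_2 < … < a_d be the elements of the image of the function n ↦ Γ_S(n) − n, and set a'_k = δ − a_{d+1−k} for k = 1, …, d. Then for every k with 1 ≤ k ≤ d − 1 and every n with a'_k ≤ n < a'_{k+1}, one has Γ_S(n) − n = a_k; and for every n ≥ a'_d one has Γ_S(n) − n = a_d. -/
/-!
Write `f n = Γ_S(n) - n`; it counts the gaps of `S` below `Γ_S(n)`, so it is monotone with values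
in `[0, δ]`. The reflection `x ↦ 2δ - 1 - x` exchanges `S` and its gaps inside `[0, 2δ)`, and
sends `Γ_S(δ - v)` to the `v`-th gap. Hence "the first `v` gaps lie below `Γ_S(n)`" becomes
`v ≤ f n ↔ δ - f (δ - v) ≤ n` for all `v ≤ δ`. For such a self-dual `f`, the map
`v ↦ f (δ - v)` is an order-reversing involution of the image `{a₁ < ⋯ < a_d}` of `f`, so it
sends `a_k` to `a_{d+1-k}`; self-duality at `v = a_k` and `v = a_{k+1}` then traps `f n`
between them.
-/

/-- The enumerating function of a set `S ⊆ ℕ`: `enumFun S n` is the `(n+1)`-st smallest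
element of `S` (0-indexed `n`-th element). -/
noncomputable def enumFun (S : Set ℕ) : ℕ → ℕ := Nat.nth (· ∈ S)

/-- The genus of a cofinite set `S ⊆ ℕ`: the number of gaps `#(ℕ \ S)`. -/
noncomputable def genus (S : Set ℕ) : ℕ := Sᶜ.ncard

/-- A cofinite set `S ⊆ ℕ` is symmetric if for every `x` with `0 ≤ x ≤ 2δ_S − 1`,
`x ∈ S ↔ 2δ_S − 1 − x ∉ S`. -/
noncomputable def IsSymmetricSet (S : Set ℕ) : Prop :=
  ∀ x : ℕ, x ≤ 2 * genus S - 1 → (x ∈ S ↔ (2 * genus S - 1 - x) ∉ S)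

open Set

theorem StrictAntiOn.add_sub_le {σ : ℕ → ℕ} {m d : ℕ} (hσ : StrictAntiOn σ (Icc m d))
    {i j : ℕ} (hi : m ≤ i) (hij : i ≤ j) (hj : j ≤ d) : σ j + (j - i) ≤ σ i := by
  induction j, hij using Nat.le_induction with
  | base => simp
  | succ j hij ih =>
    have := hσ ⟨by omega, by omega⟩ ⟨by omega, hj⟩ (Nat.lt_succ_self j)
    have := ih (by omega)
    omega

theorem StrictAntiOn.eq_rev_of_mapsTo {σ : ℕ → ℕ} {d : ℕ} (hσ : StrictAntiOn σ (Icc 1 d))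
    (hmaps : MapsTo σ (Icc 1 d) (Icc 1 d)) {k : ℕ} (hk : k ∈ Icc 1 d) : σ k = d + 1 - k := by
  have h1 := hσ.add_sub_le le_rfl hk.1 hk.2
  have hd := hσ.add_sub_le hk.1 hk.2 le_rfl
  have := (hmaps ⟨le_rfl, hk.1.trans hk.2⟩).2
  have := (hmaps ⟨hk.1.trans hk.2, le_rfl⟩).1
  omega

def IsSelfDual (δ : ℕ) (f : ℕ → ℕ) : Prop :=
  ∀ v ≤ δ, ∀ n, v ≤ f n ↔ δ - f (δ - v) ≤ n

namespace IsSelfDual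

variable {f : ℕ → ℕ} {δ : ℕ} (hdual : IsSelfDual δ f) (hf : Monotone f)
  (hle : ∀ n, f n ≤ δ)
include hdual hf hle

theorem apply_sub_apply_sub_of_mem_range {v : ℕ} (hv : v ∈ range f) :
    f (δ - f (δ - v)) = v := by
  obtain ⟨m, rfl⟩ := hv
  exact le_antisymm (hf ((hdual _ (hle m) m).1 le_rfl)) ((hdual _ (hle m) _).2 le_rfl)

theorem apply_sub_lt_apply_sub_of_mem_range {u v : ℕ} (hu : u ∈ range f) (hv : v ∈ range f)
    (huv : u < v) : f (δ - v) < f (δ - u) := by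
  refine lt_of_le_of_ne (hf (Nat.sub_le_sub_left huv.le δ)) fun h => ?_
  have hu' := hdual.apply_sub_apply_sub_of_mem_range hf hle hu
  have hv' := hdual.apply_sub_apply_sub_of_mem_range hf hle hv
  rw [h] at hv'
  omega

variable {d : ℕ} {a : ℕ → ℕ} (hmono : StrictMonoOn a (Icc 1 d))
  (himg : a '' Icc 1 d = range f)
include hmono himg

theorem apply_sub_eq_rev {k : ℕ} (hk : k ∈ Icc 1 d) : f (δ - a k) = a (d + 1 - k) := by
  have hmem : ∀ k ∈ Icc 1 d, a k ∈ range f := fun k hk => himg ▸ mem_image_of_mem a hk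
  have hσ : ∀ k ∈ Icc 1 d, ∃ j ∈ Icc 1 d, a j = f (δ - a k) := fun k _ => by
    rw [← mem_image, himg]
    exact mem_range_self _
  choose! σ hσmem hσeq using hσ
  have hanti : StrictAntiOn σ (Icc 1 d) := fun i hi j hj hij => by
    rw [← hmono.lt_iff_lt (hσmem j hj) (hσmem i hi), hσeq i hi, hσeq j hj]
    exact hdual.apply_sub_lt_apply_sub_of_mem_range hf hle (hmem i hi) (hmem j hj)
      (hmono hi hj hij)
  rw [← hσeq k hk, hanti.eq_rev_of_mapsTo hσmem hk]

theorem le_apply_iff_rev {k : ℕ} (hk : k ∈ Icc 1 d) (n : ℕ) :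
    a k ≤ f n ↔ δ - a (d + 1 - k) ≤ n := by
  obtain ⟨m, hm⟩ : a k ∈ range f := himg ▸ mem_image_of_mem a hk
  rw [← hdual.apply_sub_eq_rev hf hle hmono himg hk]
  exact hdual _ (hm ▸ hle m) n

theorem apply_eq_of_image_eq_range :
    (∀ k : ℕ, 1 ≤ k → k ≤ d - 1 → ∀ n : ℕ,
        δ - a (d + 1 - k) ≤ n → n < δ - a (d + 1 - (k + 1)) → f n = a k) ∧
    (∀ n : ℕ, δ - a 1 ≤ n → f n = a d) := by
  have hval : ∀ n, ∃ j ∈ Icc 1 d, a j = f n := fun n => by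
    rw [← mem_image, himg]
    exact mem_range_self n
  have hiff : ∀ {k}, k ∈ Icc 1 d → ∀ n, a k ≤ f n ↔ δ - a (d + 1 - k) ≤ n :=
    hdual.le_apply_iff_rev hf hle hmono himg
  refine ⟨fun k hk1 hkd n hlow hupp => ?_, fun n hn => ?_⟩
  · obtain ⟨j, hj, hjn⟩ := hval n
    have hk : k ∈ Icc 1 d := ⟨hk1, by omega⟩
    have hk' : k + 1 ∈ Icc 1 d := ⟨by omega, by omega⟩
    have hkj : a k ≤ a j := hjn ▸ (hiff hk n).2 hlow
    have hjk : a j < a (k + 1) := hjn ▸ not_le.1 fun h => ((hiff hk' n).1 h).not_gt hupp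
    rw [← hjn, show j = k by
      have := (hmono.le_iff_le hk hj).1 hkj
      have := (hmono.lt_iff_lt hj hk').1 hjk
      omega]
  · obtain ⟨j, hj, hjn⟩ := hval n
    have hd : d ∈ Icc 1 d := ⟨hj.1.trans hj.2, le_rfl⟩
    have hdj : a d ≤ a j := hjn ▸ (hiff hd n).2 (by rwa [Nat.add_sub_cancel_left])
    rw [← hjn]
    exact le_antisymm (hmono.monotoneOn hj hd hj.2) hdj

end IsSelfDual

section Gaps

open Nat

variable {S : Set ℕ} [DecidablePred (· ∈ S)]

theorem count_mem_add_count_notMem (x : ℕ) : count (· ∈ S) x + count (· ∉ S) x = x := by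
  induction x with
  | zero => simp
  | succ x ih =>
    rw [count_succ, count_succ]
    split_ifs <;> omega

theorem count_enumFun (hS : S.Infinite) (n : ℕ) : count (· ∈ S) (enumFun S n) = n :=
  count_nth_of_infinite (p := (· ∈ S)) hS n

theorem enumFun_sub_self_eq_count (hS : S.Infinite) (n : ℕ) :
    enumFun S n - n = count (· ∉ S) (enumFun S n) := by
  have := count_mem_add_count_notMem (S := S) (enumFun S n)
  rw [count_enumFun hS] at this
  omega

theorem monotone_enumFun_sub_self (hS : S.Infinite) : Monotone fun n => enumFun S n - n := by
  intro m n hmn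
  simp only [enumFun_sub_self_eq_count hS]
  exact count_monotone _ (nth_monotone hS hmn)

theorem count_notMem_le_genus (hS : Sᶜ.Finite) (x : ℕ) : count (· ∉ S) x ≤ genus S := by
  rw [genus, Set.ncard_eq_toFinset_card _ hS]
  exact count_le_card hS x

theorem enumFun_sub_self_le_genus (hS : Sᶜ.Finite) (n : ℕ) : enumFun S n - n ≤ genus S := by
  rw [enumFun_sub_self_eq_count (Set.infinite_of_finite_compl hS)]
  exact count_notMem_le_genus hS _

namespace IsSymmetricSet

variable (hsym : IsSymmetricSet S)
include hsym

theorem count_notMem_add_count_mem {y : ℕ} (hy : y ≤ 2 * genus S) :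
    count (· ∉ S) y + count (· ∈ S) (2 * genus S - y) = count (· ∈ S) (2 * genus S) := by
  induction y with
  | zero => simp
  | succ y ih =>
    have hrefl := hsym y (by omega)
    rw [show 2 * genus S - 1 - y = 2 * genus S - (y + 1) by omega] at hrefl
    have := ih (by omega)
    rw [show 2 * genus S - y = 2 * genus S - (y + 1) + 1 by omega, count_succ] at this
    rw [count_succ]
    split_ifs at this ⊢ <;> first | omega | tauto

theorem count_mem_two_mul_genus : count (· ∈ S) (2 * genus S) = genus S := by
  have := hsym.count_notMem_add_count_mem le_rfl
  have := count_mem_add_count_notMem (S := S) (2 * genus S)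
  simp only [Nat.sub_self, count_zero, add_zero] at *
  omega

theorem enumFun_sub_self_eq_genus (hS : Sᶜ.Finite) {n : ℕ} (hn : genus S ≤ n) :
    enumFun S n - n = genus S := by
  have hinf : S.Infinite := Set.infinite_of_finite_compl hS
  have h2δ : 2 * genus S ≤ enumFun S n :=
    (count_le_iff_le_nth (p := (· ∈ S)) hinf).1 (hsym.count_mem_two_mul_genus.trans_le hn)
  have h1 := count_monotone (· ∉ S) h2δ
  have h2 := hsym.count_notMem_add_count_mem le_rfl
  have h3 := count_notMem_le_genus hS (enumFun S n)
  rw [Nat.sub_self, count_zero, add_zero, hsym.count_mem_two_mul_genus] at h2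
  rw [enumFun_sub_self_eq_count hinf]
  omega

theorem le_enumFun_sub_self_iff_of_pos (hS : Sᶜ.Finite) {v : ℕ} (hv : 0 < v)
    (hvδ : v ≤ genus S) (n : ℕ) :
    v ≤ enumFun S n - n ↔ genus S - (enumFun S (genus S - v) - (genus S - v)) ≤ n := by
  have hinf : S.Infinite := Set.infinite_of_finite_compl hS
  have hδ := hsym.count_mem_two_mul_genus
  have hsδ := enumFun_sub_self_le_genus hS (genus S - v)
  have hcount_s := count_enumFun hinf (genus S - v)
  have hws : genus S - v ≤ enumFun S (genus S - v) := hcount_s.symm.trans_le (count_le _)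
  have hs : enumFun S (genus S - v) < 2 * genus S :=
    nth_lt_of_lt_count (p := (· ∈ S)) (by omega)
  -- the reflection of `Γ_S(δ - v)` is the `v`-th gap
  have hrefl := hsym.count_notMem_add_count_mem (Nat.sub_le _ (enumFun S (genus S - v)))
  rw [Nat.sub_sub_self hs.le, hcount_s, hδ] at hrefl
  have hgap : 2 * genus S - 1 - enumFun S (genus S - v) ∉ S :=
    (hsym _ (by omega)).1 (nth_mem_of_infinite (p := (· ∈ S)) hinf _)
  have hsplit := count_mem_add_count_notMem (S := S) (2 * genus S - enumFun S (genus S - v))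
  rw [enumFun_sub_self_eq_count hinf n]
  generalize enumFun S (genus S - v) = s at *
  rw [show 2 * genus S - s = 2 * genus S - 1 - s + 1 by omega] at hrefl hsplit
  have hsucc :
      count (· ∉ S) (2 * genus S - 1 - s + 1) = count (· ∉ S) (2 * genus S - 1 - s) + 1 := by
    rw [count_succ, if_pos hgap]
  calc v ≤ count (· ∉ S) (enumFun S n)
      ↔ count (· ∉ S) (2 * genus S - 1 - s) < count (· ∉ S) (enumFun S n) := by omega
    _ ↔ 2 * genus S - 1 - s + 1 ≤ enumFun S n :=
        ⟨fun h => lt_of_count_lt_count h, fun h => count_strict_mono hgap h⟩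
    _ ↔ count (· ∈ S) (2 * genus S - 1 - s + 1) ≤ n :=
        (count_le_iff_le_nth (p := (· ∈ S)) hinf).symm
    _ ↔ genus S - (s - (genus S - v)) ≤ n := by omega

theorem isSelfDual_enumFun_sub_self (hS : Sᶜ.Finite) :
    IsSelfDual (genus S) fun n => enumFun S n - n := by
  intro v hv n
  rcases Nat.eq_zero_or_pos v with rfl | hpos
  · simp [hsym.enumFun_sub_self_eq_genus hS le_rfl]
  · exact hsym.le_enumFun_sub_self_iff_of_pos hS hpos hv n

end IsSymmetricSet

end Gaps

theorem stmt4_general (S : Set ℕ) (hS : Sᶜ.Finite) (hsym : IsSymmetricSet S)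
    (d : ℕ) (a : ℕ → ℕ) (hmono : StrictMonoOn a (Set.Icc 1 d))
    (himg : a '' Set.Icc 1 d = Set.range (fun n => enumFun S n - n)) :
    (∀ k : ℕ, 1 ≤ k → k ≤ d - 1 → ∀ n : ℕ,
        genus S - a (d + 1 - k) ≤ n → n < genus S - a (d + 1 - (k + 1)) →
        enumFun S n - n = a k) ∧
    (∀ n : ℕ, genus S - a 1 ≤ n → enumFun S n - n = a d) := by
  classical
  exact (hsym.isSelfDual_enumFun_sub_self hS).apply_eq_of_image_eq_range
    (monotone_enumFun_sub_self (Set.infinite_of_finite_compl hS))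
    (enumFun_sub_self_le_genus hS) hmono himg

/-- Let `a 1 < a 2 < ⋯ < a d` enumerate the image of `n ↦ Γ_S(n) − n` and let
`a'_k = δ_S − a (d+1−k)`. Then for `1 ≤ k ≤ d − 1` and `a'_k ≤ n < a'_{k+1}` one has
`Γ_S(n) − n = a k`, and for `n ≥ a'_d` one has `Γ_S(n) − n = a d`. -/
theorem stmt4 (S : Set ℕ) (hS : Sᶜ.Finite) (h0 : 0 ∈ S) (hsym : IsSymmetricSet S)
    (d : ℕ) (a : ℕ → ℕ) (hmono : StrictMonoOn a (Set.Icc 1 d))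
    (himg : a '' Set.Icc 1 d = Set.range (fun n => enumFun S n - n)) :
    (∀ k : ℕ, 1 ≤ k → k ≤ d - 1 → ∀ n : ℕ,
        genus S - a (d + 1 - k) ≤ n → n < genus S - a (d + 1 - (k + 1)) →
        enumFun S n - n = a k) ∧
    (∀ n : ℕ, genus S - a 1 ≤ n → enumFun S n - n = a d) :=
  stmt4_general S hS hsym d a hmono himg
end

section
/- Let T ⊆ ℕ be a symmetric cofinite set with 0 ∈ T and genus δ_T; let a_1 < a_2 < … < a_d be the elements of the image of the function n ↦ Γ_T(n) − n, and set a'_k = δ_T − a_{d+1−k} for k = 1, …, d. Let S ⊆ ℕ be any cofinite set with 0 ∈ S. Then, working in ℤ, max over n ∈ ℕ of (Γ_T(n) − Γ_S(n)) exists (is attained) and max_{1 ≤ k ≤ d} (a_k + a'_k − Γ_S(a'_k)) = max_{n ∈ ℕ} (Γ_T(n) − Γ_S(n)). (This is the combinatorial identity underlying the formula ν⁺(K#\bar{L}) = max{g(K) − g(L) + max_n(Γ_L(n) − Γ_K(n)), 0} for L-space knots.) -/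
/-! Write `Γ_T(n) = n + g(n)`, where `g(n) = enumExcess T n` is the number of gaps of `T` below
`Γ_T(n)`. Since `Γ_S(n) - n` is nondecreasing, among the `n` with `g(n) = a_k` the difference
`Γ_T(n) - Γ_S(n)` is largest at the first one. The reflection `x ↦ 2δ - 1 - x` exchanges `T` and
its gaps below `2δ`, so the number of gaps below `2δ - m` is `δ` minus the number of elements of
`T` below `m`; this becomes `c ≤ g(n) ↔ δ - g(δ - c) ≤ n`. Hence `c ↦ g(δ - c)` is an antitone
involution of the value set `{a_1 < ⋯ < a_d}`, so it sends `a_k` to `a_{d+1-k}`, and the first `n`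
with `g(n) = a_k` is `δ - a_{d+1-k} = a'_k`. -/

open Set

namespace Nat

theorem count_add_count_not (p : ℕ → Prop) [DecidablePred p] (n : ℕ) :
    count p n + count (fun k => ¬p k) n = n := by
  simp only [count_eq_card_filter_range]
  rw [Finset.card_filter_add_card_filter_not, Finset.card_range]

theorem count_reflect (p : ℕ → Prop) [DecidablePred p] (n : ℕ) :
    count (fun k => p (n - 1 - k)) n = count p n := by
  simp only [count_eq_card_filter_range, Finset.card_filter]
  exact Finset.sum_range_reflect (fun k => if p k then 1 else 0) n

end Nat

noncomputable def enumExcess (S : Set ℕ) (n : ℕ) : ℕ := enumFun S n - n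

section enumExcess

open scoped Classical

variable {T : Set ℕ}

theorem enumFun_strictMono (hT : T.Infinite) : StrictMono (enumFun T) :=
  Nat.nth_strictMono hT

theorem enumFun_eq_add_enumExcess (hT : T.Infinite) (n : ℕ) :
    enumFun T n = n + enumExcess T n := by
  have := (enumFun_strictMono hT).le_apply (x := n)
  unfold enumExcess
  omega

theorem enumExcess_monotone (hT : T.Infinite) : Monotone (enumExcess T) := by
  refine monotone_nat_of_le_succ fun n => ?_
  have := enumFun_strictMono hT n.lt_succ_self
  rw [enumFun_eq_add_enumExcess hT n, enumFun_eq_add_enumExcess hT (n + 1)] at this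
  omega

theorem le_enumExcess_iff (hT : T.Infinite) {c n : ℕ} :
    c ≤ enumExcess T n ↔ c ≤ Nat.count (· ∉ T) (n + c) := by
  have hcount : Nat.count (· ∈ T) (n + c) ≤ n ↔ n + c ≤ enumFun T n :=
    Nat.count_le_iff_le_nth (p := (· ∈ T)) hT
  have := Nat.count_add_count_not (· ∈ T) (n + c)
  rw [enumFun_eq_add_enumExcess hT] at hcount
  omega

theorem count_notMem_le_genus_s5 (hT : Tᶜ.Finite) (m : ℕ) :
    Nat.count (· ∉ T) m ≤ genus T := by
  rw [genus, ncard_eq_toFinset_card _ hT]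
  exact Nat.count_le_card hT m

theorem enumExcess_le_genus (hT : Tᶜ.Finite) (n : ℕ) : enumExcess T n ≤ genus T := by
  exact ((le_enumExcess_iff (infinite_of_finite_compl hT)).1 le_rfl).trans
    (count_notMem_le_genus_s5 hT _)

end enumExcess

namespace IsSymmetricSet

open scoped Classical

variable {T : Set ℕ} (hsym : IsSymmetricSet T)
include hsym

theorem count_notMem_sub_add_count_mem {m : ℕ} (hm : m ≤ 2 * genus T) :
    Nat.count (· ∉ T) (2 * genus T - m) + Nat.count (· ∈ T) m
      = Nat.count (· ∉ T) (2 * genus T) := by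
  have hreflect : Nat.count (fun k => 2 * genus T - m + k ∉ T) m = Nat.count (· ∈ T) m := by
    rw [← Nat.count_reflect]
    simp only [Nat.count_eq_card_filter_range]
    congr 1
    refine Finset.filter_congr fun k hk => ?_
    rw [Finset.mem_range] at hk
    rw [show 2 * genus T - m + (m - 1 - k) = 2 * genus T - 1 - k by omega]
    exact (hsym k (by omega)).symm
  rw [← hreflect, ← Nat.count_add, Nat.sub_add_cancel hm]

theorem count_notMem_two_mul_genus : Nat.count (· ∉ T) (2 * genus T) = genus T := by
  have h := hsym.count_notMem_sub_add_count_mem le_rfl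
  have := Nat.count_add_count_not (· ∈ T) (2 * genus T)
  rw [Nat.sub_self, Nat.count_zero, zero_add] at h
  omega

theorem enumExcess_genus (hT : Tᶜ.Finite) : enumExcess T (genus T) = genus T := by
  refine (enumExcess_le_genus hT _).antisymm
    ((le_enumExcess_iff (infinite_of_finite_compl hT)).2 ?_)
  rw [← two_mul, hsym.count_notMem_two_mul_genus]

theorem le_enumExcess_iff (hT : Tᶜ.Finite) {c n : ℕ} (hc : c ≤ genus T) :
    c ≤ enumExcess T n ↔ genus T - enumExcess T (genus T - c) ≤ n := by
  have hTinf := infinite_of_finite_compl hT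
  rcases le_or_gt (genus T) n with hn | hn
  · have := (hsym.enumExcess_genus hT).ge.trans (enumExcess_monotone hTinf hn)
    omega
  · have hdual := hsym.count_notMem_sub_add_count_mem (m := n + c) (by omega)
    have hsplit := Nat.count_add_count_not (· ∈ T) (n + c)
    have htotal := hsym.count_notMem_two_mul_genus
    rw [_root_.le_enumExcess_iff hTinf, Nat.sub_le_iff_le_add, ← Nat.sub_le_iff_le_add',
      _root_.le_enumExcess_iff hTinf,
      show genus T - c + (genus T - n) = 2 * genus T - (n + c) by omega]
    omega

theorem enumExcess_involutive (hT : Tᶜ.Finite) (m : ℕ) :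
    enumExcess T (genus T - enumExcess T (genus T - enumExcess T m)) = enumExcess T m := by
  have hc := enumExcess_le_genus hT m
  exact (enumExcess_monotone (infinite_of_finite_compl hT)
    ((hsym.le_enumExcess_iff hT hc).1 le_rfl)).antisymm ((hsym.le_enumExcess_iff hT hc).2 le_rfl)

end IsSymmetricSet

theorem StrictAntiOn.eq_sub_of_mapsTo_Icc {J : ℕ → ℕ} {d : ℕ} (hJ : StrictAntiOn J (Icc 1 d))
    (hmaps : MapsTo J (Icc 1 d) (Icc 1 d)) {k : ℕ} (hk : k ∈ Icc 1 d) : J k = d + 1 - k := by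
  have hstep : ∀ i j, 1 ≤ i → i ≤ j → j ≤ d → J j + (j - i) ≤ J i := by
    intro i j hi hij hjd
    induction j, hij using Nat.le_induction with
    | base => omega
    | succ j hij ih =>
      have := hJ ⟨by omega, by omega⟩ ⟨by omega, hjd⟩ j.lt_succ_self
      have := ih (by omega)
      omega
  obtain ⟨hk1, hkd⟩ := hk
  have h1 := hstep 1 k le_rfl hk1 hkd
  have h2 := hstep k d hk1 hkd le_rfl
  have h3 := (hmaps ⟨le_rfl, hk1.trans hkd⟩).2
  have h4 := (hmaps ⟨hk1.trans hkd, le_rfl⟩).1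
  omega

theorem StrictMonoOn.antitone_involution_apply {a : ℕ → ℕ} {d : ℕ} (ha : StrictMonoOn a (Icc 1 d))
    {φ : ℕ → ℕ} (hφ : Antitone φ) (hmaps : MapsTo φ (a '' Icc 1 d) (a '' Icc 1 d))
    (hinv : ∀ x ∈ a '' Icc 1 d, φ (φ x) = x) {k : ℕ} (hk : k ∈ Icc 1 d) :
    φ (a k) = a (d + 1 - k) := by
  have hJ : ∀ k ∈ Icc 1 d, ∃ j ∈ Icc 1 d, a j = φ (a k) :=
    fun k hk => hmaps (mem_image_of_mem a hk)
  choose! J hJmem hJeq using hJ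
  have hanti : StrictAntiOn J (Icc 1 d) := by
    intro k hk k' hk' hkk'
    have hlt : φ (a k') < φ (a k) := by
      refine (hφ (ha hk hk' hkk').le).lt_of_ne fun h => (ha hk hk' hkk').ne ?_
      rw [← hinv _ (mem_image_of_mem a hk), ← hinv _ (mem_image_of_mem a hk'), h]
    rw [← hJeq k hk, ← hJeq k' hk'] at hlt
    exact (ha.lt_iff_lt (hJmem k' hk') (hJmem k hk)).1 hlt
  rw [← hJeq k hk, hanti.eq_sub_of_mapsTo_Icc hJmem hk]

theorem isGreatest_range_sup' {α β ι : Type*} [LinearOrder α] {s : Finset ι} (hs : s.Nonempty)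
    {F : β → α} {G : ι → α} (hle : ∀ b, ∃ i ∈ s, F b ≤ G i) (hG : ∀ i ∈ s, G i ∈ range F) :
    IsGreatest (range F) (s.sup' hs G) := by
  obtain ⟨i, hi, heq⟩ := Finset.exists_mem_eq_sup' hs G
  refine ⟨heq ▸ hG i hi, ?_⟩
  rintro _ ⟨b, rfl⟩
  obtain ⟨j, hj, hb⟩ := hle b
  exact hb.trans (Finset.le_sup' G hj)

theorem stmt5_general (T : Set ℕ) (hT : Tᶜ.Finite) (hsym : IsSymmetricSet T)
    (d : ℕ) (hd : 1 ≤ d) (a : ℕ → ℕ) (hmono : StrictMonoOn a (Set.Icc 1 d))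
    (himg : a '' Set.Icc 1 d = Set.range (fun n => enumFun T n - n))
    (S : Set ℕ) (hS : Sᶜ.Finite) :
    IsGreatest (Set.range fun n : ℕ => (enumFun T n : ℤ) - (enumFun S n : ℤ))
      ((Finset.Icc 1 d).sup' (Finset.nonempty_Icc.mpr hd) fun k =>
        (a k : ℤ) + ((genus T - a (d + 1 - k) : ℕ) : ℤ)
          - (enumFun S (genus T - a (d + 1 - k)) : ℤ)) := by
  change a '' Icc 1 d = range (enumExcess T) at himg
  have hTinf := infinite_of_finite_compl hT
  have hrev : ∀ k ∈ Icc 1 d, enumExcess T (genus T - a k) = a (d + 1 - k) := by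
    refine fun k => hmono.antitone_involution_apply (φ := fun c => enumExcess T (genus T - c))
      (fun x y hxy => enumExcess_monotone hTinf (by omega)) ?_ ?_
    · exact fun _ _ => himg ▸ mem_range_self _
    · rintro _ hx
      obtain ⟨m, rfl⟩ : _ ∈ range (enumExcess T) := himg ▸ hx
      exact hsym.enumExcess_involutive hT m
  refine isGreatest_range_sup' _ (fun n => ?_) (fun k hk => ?_)
  · obtain ⟨k, hk, hak⟩ : enumExcess T n ∈ a '' Icc 1 d := himg ▸ mem_range_self n
    refine ⟨k, Finset.mem_Icc.2 hk, ?_⟩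
    have hfirst : genus T - a (d + 1 - k) ≤ n := by
      rw [← hrev k hk]
      exact (hsym.le_enumExcess_iff hT (hak ▸ enumExcess_le_genus hT n)).1 hak.le
    have hS_step := (enumFun_strictMono (infinite_of_finite_compl hS)).add_le_nat
      (n - (genus T - a (d + 1 - k))) (genus T - a (d + 1 - k))
    rw [Nat.sub_add_cancel hfirst] at hS_step
    rw [enumFun_eq_add_enumExcess hTinf, ← hak]
    push_cast
    omega
  · refine ⟨genus T - a (d + 1 - k), ?_⟩
    rw [Finset.mem_Icc] at hk
    have hattained := hrev (d + 1 - k) ⟨by omega, by omega⟩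
    rw [Nat.sub_sub_self (by omega : k ≤ d + 1)] at hattained
    simp only [enumFun_eq_add_enumExcess hTinf, hattained]
    push_cast
    ring

/-- Let `T` be symmetric cofinite with `a 1 < ⋯ < a d` the image of `n ↦ Γ_T(n) − n`
and `a'_k = δ_T − a (d+1−k)`; let `S` be cofinite. Then, in `ℤ`, the maximum of
`Γ_T(n) − Γ_S(n)` over `n ∈ ℕ` is attained and equals
`max_{1 ≤ k ≤ d} (a_k + a'_k − Γ_S(a'_k))`. -/
theorem stmt5 (T : Set ℕ) (hT : Tᶜ.Finite) (h0T : 0 ∈ T) (hsym : IsSymmetricSet T)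
    (d : ℕ) (hd : 1 ≤ d) (a : ℕ → ℕ) (hmono : StrictMonoOn a (Set.Icc 1 d))
    (himg : a '' Set.Icc 1 d = Set.range (fun n => enumFun T n - n))
    (S : Set ℕ) (hS : Sᶜ.Finite) (h0S : 0 ∈ S) :
    IsGreatest (Set.range fun n : ℕ => (enumFun T n : ℤ) - (enumFun S n : ℤ))
      ((Finset.Icc 1 d).sup' (Finset.nonempty_Icc.mpr hd) fun k =>
        (a k : ℤ) + ((genus T - a (d + 1 - k) : ℕ) : ℤ)
          - (enumFun S (genus T - a (d + 1 - k)) : ℤ)) :=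
  stmt5_general T hT hsym d hd a hmono himg S hS
end
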